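/- For a smooth strictly positive scalar field ρ on T^d, the Bohm potential identity (ħ²/2) ρ ∇(Δ√ρ / √ρ) = (ħ²/4) Div(ρ ∇² log ρ) holds pointwise, where ∇² denotes the Hessian. -/

import Mathlib

/-- Partial derivative `∂f/∂x_i` of a scalar field on `ℝ^d`. -/
noncomputable def pd {d : ℕ} (f : (Fin d → ℝ) → ℝ) (i : Fin d) (x : Fin d → ℝ) : ℝ :=
  fderiv ℝ f x (Pi.single i 1)

/-- Laplacian of a scalar field on `ℝ^d`. -/
noncomputable def lap {d : ℕ} (f : (Fin d → ℝ) → ℝ) (x : Fin d → ℝ) : ℝ :=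
  ∑ i, pd (pd f i) i x

/-! Write `ρ = exp u` with `u = log ρ`, so that `√ρ = exp (u / 2)`. Then
`Δ√ρ / √ρ = Δu / 2 + |∇u|² / 4` and `ρ ∇² log ρ = exp u ∇² u`, and both sides of the identity
become `(ħ² / 4) exp u (∂ᵢ Δu + ∑ⱼ ∂ⱼu ∂ᵢ∂ⱼu)`; matching the third-order terms
`∂ⱼ∂ᵢ∂ⱼu = ∂ᵢ∂ⱼ∂ⱼu` is the symmetry of second derivatives applied to `∂ⱼu`. -/

open Real

section PartialDerivatives

variable {d : ℕ} {f g : (Fin d → ℝ) → ℝ} {x : Fin d → ℝ}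

lemma contDiff_pd {n m : WithTop ℕ∞} (hf : ContDiff ℝ n f) (hmn : m + 1 ≤ n) (i : Fin d) :
    ContDiff ℝ m (pd f i) :=
  (hf.fderiv_right hmn).clm_apply contDiff_const

lemma pd_add (i : Fin d) (hf : DifferentiableAt ℝ f x) (hg : DifferentiableAt ℝ g x) :
    pd (fun y => f y + g y) i x = pd f i x + pd g i x := by
  simp only [pd, fderiv_fun_add hf hg, add_apply]

lemma pd_mul (i : Fin d) (hf : DifferentiableAt ℝ f x) (hg : DifferentiableAt ℝ g x) :
    pd (fun y => f y * g y) i x = pd f i x * g x + f x * pd g i x := by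
  simp only [pd, fderiv_fun_mul hf hg, add_apply, smul_apply, smul_eq_mul]
  ring

lemma pd_div_const (i : Fin d) (hf : DifferentiableAt ℝ f x) (c : ℝ) :
    pd (fun y => f y / c) i x = pd f i x / c := by
  simp only [pd, div_eq_mul_inv, fderiv_mul_const hf, smul_apply, smul_eq_mul]
  ring

lemma pd_exp (i : Fin d) (hf : DifferentiableAt ℝ f x) :
    pd (fun y => exp (f y)) i x = exp (f x) * pd f i x := by
  simp only [pd, fderiv_exp hf, smul_apply, smul_eq_mul]

lemma pd_sum {ι : Type*} (s : Finset ι) (F : ι → (Fin d → ℝ) → ℝ) (i : Fin d)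
    (hF : ∀ j ∈ s, DifferentiableAt ℝ (F j) x) :
    pd (fun y => ∑ j ∈ s, F j y) i x = ∑ j ∈ s, pd (F j) i x := by
  simp only [pd, fderiv_fun_sum hF, sum_apply]

lemma pd_pd_eq_fderiv_fderiv (hf : DifferentiableAt ℝ (fderiv ℝ f) x) (i j : Fin d) :
    pd (pd f i) j x = fderiv ℝ (fderiv ℝ f) x (Pi.single j 1) (Pi.single i 1) := by
  show fderiv ℝ (fun y => fderiv ℝ f y (Pi.single i 1)) x _ = _
  simp [fderiv_clm_apply hf (differentiableAt_const _)]

lemma pd_comm (hf : ContDiff ℝ 2 f) (i j : Fin d) :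
    pd (pd f i) j x = pd (pd f j) i x := by
  have hf' : Differentiable ℝ (fderiv ℝ f) :=
    (hf.fderiv_right (m := 1) le_rfl).differentiable one_ne_zero
  rw [pd_pd_eq_fderiv_fderiv (hf' x), pd_pd_eq_fderiv_fderiv (hf' x)]
  exact hf.contDiffAt.isSymmSndFDerivAt (by simp) _ _

end PartialDerivatives

section ExpCoordinates

variable {d : ℕ} {u : (Fin d → ℝ) → ℝ}

lemma pd_exp_half (hu : Differentiable ℝ u) (j : Fin d) (z : Fin d → ℝ) :
    pd (fun z => exp (u z / 2)) j z = exp (u z / 2) * (pd u j z / 2) := by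
  rw [pd_exp j (by fun_prop), pd_div_const j (hu z)]

lemma lap_exp_half_div_exp_half (hu : ContDiff ℝ 2 u) (y : Fin d → ℝ) :
    lap (fun z => exp (u z / 2)) y / exp (u y / 2)
      = ∑ j, (pd (pd u j) j y / 2 + pd u j y * pd u j y / 4) := by
  have hu₁ : Differentiable ℝ u := hu.differentiable two_ne_zero
  have hpd : ∀ j, Differentiable ℝ (pd u j) := fun j =>
    (contDiff_pd hu le_rfl j).differentiable one_ne_zero
  rw [lap, Finset.sum_div]
  refine Finset.sum_congr rfl fun j _ => ?_
  rw [funext (pd_exp_half hu₁ j), pd_mul j (by fun_prop) (by fun_prop), pd_exp_half hu₁,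
    pd_div_const j (hpd j y)]
  field_simp
  ring

theorem bohm_potential_identity_exp (hu : ContDiff ℝ 3 u) (x : Fin d → ℝ) (i : Fin d) :
    2 * exp (u x) * pd (fun y => lap (fun z => exp (u z / 2)) y / exp (u y / 2)) i x
      = ∑ j, pd (fun y => exp (u y) * pd (pd u j) i y) j x := by
  have hu₁ : Differentiable ℝ u := hu.differentiable (by norm_num)
  have hpd : ∀ j, ContDiff ℝ 2 (pd u j) := fun j => contDiff_pd hu (by norm_num) j
  have hpd₁ : ∀ j, Differentiable ℝ (pd u j) := fun j => (hpd j).differentiable two_ne_zero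
  have hpd₂ : ∀ j k, Differentiable ℝ (pd (pd u j) k) := fun j k =>
    (contDiff_pd (hpd j) (by norm_num) k).differentiable one_ne_zero
  rw [funext (lap_exp_half_div_exp_half (hu.of_le (by norm_num))),
    pd_sum _ (fun j y => pd (pd u j) j y / 2 + pd u j y * pd u j y / 4) i fun j _ => by fun_prop,
    Finset.mul_sum]
  refine Finset.sum_congr rfl fun j _ => ?_
  rw [pd_add i (by fun_prop) (by fun_prop), pd_div_const i (hpd₂ j j x),
    pd_div_const i (by fun_prop), pd_mul i (hpd₁ j x) (hpd₁ j x),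
    pd_mul j (by fun_prop) (hpd₂ j i x), pd_exp j (hu₁ x), pd_comm (hpd j) i j]
  ring

end ExpCoordinates

theorem bohm_potential_identity_general {d : ℕ} (hbar : ℝ)
    (ρ : (Fin d → ℝ) → ℝ) (hρ : ContDiff ℝ 3 ρ) (hpos : ∀ x, 0 < ρ x)
    (x : Fin d → ℝ) (i : Fin d) :
    hbar ^ 2 / 2 * ρ x *
        pd (fun y => lap (fun z => Real.sqrt (ρ z)) y / Real.sqrt (ρ y)) i x
      = hbar ^ 2 / 4 *
        ∑ j, pd (fun y => ρ y *
          pd (fun z => pd (fun w => Real.log (ρ w)) j z) i y) j x := by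
  obtain ⟨u, hu, rfl⟩ : ∃ u, ContDiff ℝ 3 u ∧ ρ = fun y => exp (u y) :=
    ⟨fun y => log (ρ y), hρ.log fun y => (hpos y).ne',
      funext fun y => (exp_log (hpos y)).symm⟩
  simp only [log_exp, ← exp_half]
  rw [← bohm_potential_identity_exp hu x i]
  ring

/-- **Bohm potential identity** on the torus (functions on `ℝ^d` periodic with
respect to `ℤ^d`): for a `C³` strictly positive scalar field `ρ`,
`(ħ²/2) ρ ∇(Δ√ρ / √ρ) = (ħ²/4) Div(ρ ∇² log ρ)`, where `Div` of the matrix field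
`ρ ∇² log ρ` is taken row-wise. -/
theorem bohm_potential_identity {d : ℕ} (hbar : ℝ) (hhbar : 0 < hbar)
    (ρ : (Fin d → ℝ) → ℝ) (hρ : ContDiff ℝ 3 ρ) (hpos : ∀ x, 0 < ρ x)
    (hper : ∀ (x : Fin d → ℝ) (k : Fin d → ℤ), ρ (x + fun i => (k i : ℝ)) = ρ x)
    (x : Fin d → ℝ) (i : Fin d) :
    hbar ^ 2 / 2 * ρ x *
        pd (fun y => lap (fun z => Real.sqrt (ρ z)) y / Real.sqrt (ρ y)) i x
      = hbar ^ 2 / 4 *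
        ∑ j, pd (fun y => ρ y *
          pd (fun z => pd (fun w => Real.log (ρ w)) j z) i y) j x :=
  bohm_potential_identity_general hbar ρ hρ hpos x i
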